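/- arXiv:2310.08189 — 3 statements merged into one kernel-verified Lean document; each statement's English description precedes it below -/
import Mathlib

section
/- Let Γ=(G,σ) be a signed graph on n vertices with nonnegative potential κ≥0. For all real numbers 1<p≤q and every 1≤k≤n, one has 2^{−p}·λ_k^{(p)}(Γ) ≥ 2^{−q}·λ_k^{(q)}(Γ), and p·(λ_k^{(p)}(Γ)/𝒟)^{1/p} ≤ q·(λ_k^{(q)}(Γ)/𝒟)^{1/q}, where 𝒟 = max_{1≤i≤n} (2κ_i + Σ_{j∼i} w_{ij})/(2μ_i). -/
open Filter Topology Polynomial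
open scoped Classical

noncomputable section

variable {V : Type} [Fintype V] [DecidableEq V]

/-- Sum of a (symmetric) summand over the unordered edges of `G`. -/
def sgEdgeSum (G : SimpleGraph V) (F : V → V → ℝ) : ℝ :=
  (∑ i : V, ∑ j : V, if G.Adj i j then F i j else 0) / 2

/-- The Rayleigh quotient `R_p^σ` of the signed graph `p`-Laplacian with
edge weight `w`, signature `sgn`, vertex measure `μ` and potential `κ`. -/
def sgRayleigh (G : SimpleGraph V) (w sgn : V → V → ℝ) (μ κ : V → ℝ)
    (p : ℝ) (f : V → ℝ) : ℝ :=
  (sgEdgeSum G (fun i j => w i j * |f i - sgn i j * f j| ^ p) +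
      ∑ i : V, κ i * |f i| ^ p) /
    ∑ i : V, μ i * |f i| ^ p

/-- The unit sphere `S_p` of `ℓ^p(μ)`. -/
def pSphere (μ : V → ℝ) (p : ℝ) : Set (V → ℝ) :=
  {f | ∑ i : V, μ i * |f i| ^ p = 1}

/-- There is an odd continuous map from `B` into `ℝ^m ∖ {0}`. -/
def hasOddMapInto (B : Set (V → ℝ)) (m : ℕ) : Prop :=
  ∃ h : (V → ℝ) → (Fin m → ℝ),
    ContinuousOn h B ∧ (∀ x ∈ B, h x ≠ 0) ∧ (∀ x ∈ B, h (-x) = -(h x))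

/-- The Krasnoselskii genus of `B` is at least `k`. -/
def genusGe (B : Set (V → ℝ)) (k : ℕ) : Prop :=
  ∀ m, m < k → ¬ hasOddMapInto B m

/-- The family `F_k(S_p)` of closed symmetric subsets of the sphere `S_p`
with Krasnoselskii genus at least `k`. -/
def genusFamily (μ : V → ℝ) (p : ℝ) (k : ℕ) : Set (Set (V → ℝ)) :=
  {B | B ⊆ pSphere μ p ∧ IsClosed B ∧ (∀ x ∈ B, -x ∈ B) ∧ genusGe B k}

/-- The `k`-th variational eigenvalue `λ_k^{(p)}` of the signed graph `p`-Laplacian. -/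
def varEig (G : SimpleGraph V) (w sgn : V → V → ℝ) (μ κ : V → ℝ)
    (p : ℝ) (k : ℕ) : ℝ :=
  sInf ((fun B => sSup (sgRayleigh G w sgn μ κ p '' B)) '' genusFamily μ p k)

/-- The `k`-th smallest real root (1-indexed, counted with multiplicity) of the
characteristic polynomial of `A`; for a matrix with real spectrum this is the
`k`-th eigenvalue `λ_k(A)` in the ordering `λ_1 ≤ … ≤ λ_n`. -/
def eigval {m : Type} [Fintype m] [DecidableEq m] (A : Matrix m m ℝ) (k : ℕ) : ℝ :=
  (Multiset.sort A.charpoly.roots (· ≤ ·)).getD (k - 1) 0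

/-- The normalized adjacency matrix `A^μ_{-Γ}` of the negation of the signed graph
`(H, sgn)` with edge weight `w` and vertex measure `μ`. -/
def negAdj (H : SimpleGraph V) (w sgn : V → V → ℝ) (μ : V → ℝ) : Matrix V V ℝ :=
  fun i j => if H.Adj i j then -(sgn i j) * w i j / μ i else 0

/-- The normalized adjacency matrix `A^μ_{-Γ₀}` of the negation of the subgraph of
`(H, sgn)` with vertex set `s`, with restricted edge weight and vertex measure. -/
def negAdjSub (H : SimpleGraph V) (s : Finset V) (w sgn : V → V → ℝ) (μ : V → ℝ) :
    Matrix {x // x ∈ s} {x // x ∈ s} ℝ :=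
  fun i j => if H.Adj ↑i ↑j then -(sgn ↑i ↑j) * w ↑i ↑j / μ ↑i else 0

/-- The subgraph of `G` induced on the vertex set `s`. -/
def inducedGraph (G : SimpleGraph V) (s : Finset V) : SimpleGraph {x // x ∈ s} where
  Adj i j := G.Adj ↑i ↑j
  symm := ⟨fun _ _ h => G.adj_symm h⟩
  loopless := ⟨fun i h => G.irrefl (v := ↑i) h⟩

/-- `G` has an edge cover of cardinality `m`. -/
def edgeCoverCard {α : Type} (G : SimpleGraph α) (m : ℕ) : Prop :=
  ∃ C : Finset (Sym2 α), (C : Set (Sym2 α)) ⊆ G.edgeSet ∧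
    (∀ v : α, ∃ e ∈ C, v ∈ e) ∧ C.card = m

end

/-!
For `α > 0` let `Φ_α f = sign f * |f| ^ α` coordinatewise. Since `|Φ_{p/q} f| ^ q = |f| ^ p`,
`Φ_{p/q}` is an odd homeomorphism of `S_p` onto `S_q` with inverse `Φ_{q/p}`; it therefore
preserves closedness, symmetry and genus, and matches `F_k(S_p)` with `F_k(S_q)`. Both
inequalities then follow from pointwise comparisons of Rayleigh quotients along `Φ`:

* the Hölder-type bound `|Φ_α a - Φ_α b| ≤ 2 ^ (1 - α) |a - b| ^ α` (`α ≤ 1`) gives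
  `R_q(Φ_{p/q} f) ≤ 2 ^ (q - p) R_p(f)` on `S_p`;
* the Lipschitz-type bound `|Φ_β a - Φ_β b| ≤ β M_q(|a|, |b|) ^ (β - 1) |a - b|`, where
  `β = q / p ≥ 1` and `M_q` is the power mean, combined with Hölder's inequality with exponent
  `p / q` over the edges and the potential, and `∑_{i ∼ j} w_{ij} M_q ^ q + ∑ κ_i |g_i| ^ q ≤ 𝒟`
  on `S_q`, gives `R_p(Φ_{q/p} g) ≤ (q / p) ^ p 𝒟 ^ (1 - p / q) R_q(g) ^ (p / q)`.

The same-sign case of the second bound is the Hermite–Hadamard inequality for `s ↦ s ^ (1/β - 1)`.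
-/

open Real

lemma add_div_two_rpow_le {x y p : ℝ} (hx : 0 ≤ x) (hy : 0 ≤ y) (hp : 1 ≤ p) :
    ((x + y) / 2) ^ p ≤ (x ^ p + y ^ p) / 2 := by
  have h := (convexOn_rpow hp).2 (Set.mem_Ici.2 hx) (Set.mem_Ici.2 hy)
    (by norm_num : (0 : ℝ) ≤ 1 / 2) (by norm_num : (0 : ℝ) ≤ 1 / 2) (by norm_num)
  simp only [smul_eq_mul] at h
  rw [show 1 / 2 * x + 1 / 2 * y = (x + y) / 2 by ring] at h
  linarith

lemma add_rpow_le_two_rpow_mul {x y α : ℝ} (hx : 0 ≤ x) (hy : 0 ≤ y) (hα₀ : 0 ≤ α)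
    (hα₁ : α ≤ 1) : x ^ α + y ^ α ≤ 2 ^ (1 - α) * (x + y) ^ α := by
  have h := (concaveOn_rpow hα₀ hα₁).2 (Set.mem_Ici.2 hx) (Set.mem_Ici.2 hy)
    (by norm_num : (0 : ℝ) ≤ 1 / 2) (by norm_num : (0 : ℝ) ≤ 1 / 2) (by norm_num)
  simp only [smul_eq_mul] at h
  rw [← mul_add, show 1 / 2 * x + 1 / 2 * y = (x + y) / 2 by ring,
    div_rpow (by positivity) zero_le_two] at h
  rw [rpow_sub two_pos, rpow_one]
  rw [le_div_iff₀ (by positivity)] at h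
  field_simp
  linarith

lemma two_rpow_one_sub_inv_le {β : ℝ} (hβ : 1 ≤ β) : (2 : ℝ) ^ (1 - β⁻¹) ≤ β := by
  have hγ₀ : 0 < β⁻¹ := by positivity
  have hγ₁ : β⁻¹ ≤ 1 := inv_le_one_of_one_le₀ hβ
  have hbern := rpow_one_add_le_one_add_mul_self (s := 1) (by norm_num)
    (sub_nonneg.2 hγ₁) (by linarith : 1 - β⁻¹ ≤ 1)
  have hβγ : β * β⁻¹ = 1 := mul_inv_cancel₀ (by positivity)
  norm_num at hbern
  nlinarith [sq_nonneg (1 - β⁻¹)]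

lemma one_add_mul_sub_one_le_rpow {c x : ℝ} (hc₀ : -1 ≤ c) (hc₁ : c ≤ 0) (hx : 0 < x) :
    1 + c * (x - 1) ≤ x ^ c := by
  have h := rpow_one_add_le_one_add_mul_self (s := x - 1) (by linarith)
    (neg_nonneg.2 hc₁) (by linarith : -c ≤ 1)
  rw [add_sub_cancel, rpow_neg hx.le] at h
  have hxc : 0 < x ^ c := rpow_pos_of_pos hx c
  have hu : 0 < 1 + -c * (x - 1) := lt_of_lt_of_le (inv_pos.2 hxc) h
  rw [inv_le_iff_one_le_mul₀ hxc] at h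
  nlinarith [sq_nonneg (c * (x - 1))]

lemma rpow_add_mul_sub_le_rpow {c m s : ℝ} (hc₀ : -1 ≤ c) (hc₁ : c ≤ 0) (hm : 0 < m)
    (hs : 0 < s) : m ^ c + c * m ^ (c - 1) * (s - m) ≤ s ^ c := by
  have h := one_add_mul_sub_one_le_rpow hc₀ hc₁ (div_pos hs hm)
  rw [div_rpow hs.le hm.le, le_div_iff₀ (rpow_pos_of_pos hm c)] at h
  refine le_of_eq_of_le ?_ h
  rw [rpow_sub_one hm.ne']
  field_simp

/-- Hermite–Hadamard: the integral of the convex function `s ↦ s ^ (γ - 1)` over `[v, u]`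
dominates that of its tangent line at the midpoint. -/
lemma mul_sub_mul_rpow_le_rpow_sub_rpow {γ u v : ℝ} (hγ₀ : 0 < γ) (hγ₁ : γ ≤ 1) (hv : 0 < v)
    (hvu : v ≤ u) : γ * (u - v) * ((u + v) / 2) ^ (γ - 1) ≤ u ^ γ - v ^ γ := by
  set m := (u + v) / 2
  have hm : 0 < m := by simp only [m]; linarith
  have h0 : (0 : ℝ) ∉ Set.uIcc v u := by
    rw [Set.uIcc_of_le hvu]
    exact fun h => (not_le.2 hv) h.1
  have htangent : ∫ s in v..u, (m ^ (γ - 1) + (γ - 1) * m ^ (γ - 1 - 1) * (s - m)) ≤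
      ∫ s in v..u, s ^ (γ - 1) :=
    intervalIntegral.integral_mono_on hvu ((by fun_prop : Continuous _).intervalIntegrable _ _)
      (intervalIntegral.intervalIntegrable_rpow (Or.inr h0))
      fun s hs => rpow_add_mul_sub_le_rpow (by linarith) (by linarith) hm (hv.trans_le hs.1)
  rw [integral_rpow (Or.inl (by linarith)), sub_add_cancel] at htangent
  have hline : ∫ s in v..u, (m ^ (γ - 1) + (γ - 1) * m ^ (γ - 1 - 1) * (s - m)) =
      (u - v) * m ^ (γ - 1) := by
    simp only [mul_sub]
    rw [intervalIntegral.integral_add intervalIntegrable_const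
        ((by fun_prop : Continuous _).intervalIntegrable _ _),
      intervalIntegral.integral_sub ((by fun_prop : Continuous _).intervalIntegrable _ _)
        intervalIntegrable_const,
      intervalIntegral.integral_const_mul, integral_id, intervalIntegral.integral_const,
      intervalIntegral.integral_const, smul_eq_mul, smul_eq_mul]
    ring
  rw [hline, le_div_iff₀ hγ₀] at htangent
  linarith

lemma rpow_sub_rpow_le_mul_rpow_mean {β a b : ℝ} (hβ : 1 ≤ β) (hb : 0 ≤ b) (hba : b ≤ a) :
    a ^ β - b ^ β ≤ β * ((a ^ β + b ^ β) / 2) ^ (1 - β⁻¹) * (a - b) := by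
  have hβ₀ : 0 < β := by linarith
  rcases hb.eq_or_lt with rfl | hb
  · rcases hba.eq_or_lt with rfl | ha
    · simp
    have hmean : ((a ^ β + 0 ^ β) / 2) ^ (1 - β⁻¹) = a ^ β / a / 2 ^ (1 - β⁻¹) := by
      rw [zero_rpow hβ₀.ne', add_zero, div_rpow (by positivity) zero_le_two, ← rpow_mul ha.le,
        mul_one_sub, mul_inv_cancel₀ hβ₀.ne', rpow_sub ha, rpow_one]
    rw [hmean, zero_rpow hβ₀.ne', sub_zero, sub_zero]
    have h2 := two_rpow_one_sub_inv_le hβ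
    have haβ : 0 < a ^ β := by positivity
    rw [show β * (a ^ β / a / 2 ^ (1 - β⁻¹)) * a = β / 2 ^ (1 - β⁻¹) * a ^ β by
      field_simp]
    exact le_mul_of_one_le_left haβ.le ((one_le_div (by positivity)).2 h2)
  · have hP : 0 < (a ^ β + b ^ β) / 2 := by
      have := rpow_pos_of_pos (hb.trans_le hba) β
      positivity
    have h := mul_sub_mul_rpow_le_rpow_sub_rpow (inv_pos.2 hβ₀) (inv_le_one_of_one_le₀ hβ)
      (rpow_pos_of_pos hb β) (rpow_le_rpow hb.le hba hβ₀.le)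
    rw [← rpow_mul (hb.le.trans hba), ← rpow_mul hb.le, mul_inv_cancel₀ hβ₀.ne', rpow_one,
      rpow_one, show β⁻¹ - 1 = -(1 - β⁻¹) by ring, rpow_neg hP.le] at h
    have hPpow : 0 < ((a ^ β + b ^ β) / 2) ^ (1 - β⁻¹) := rpow_pos_of_pos hP _
    rw [mul_inv_le_iff₀ hPpow, inv_mul_le_iff₀ hβ₀] at h
    linarith

lemma rpow_mean_rpow_le {a b β q : ℝ} (ha : 0 ≤ a) (hb : 0 ≤ b) (hβ : 0 < β) (hβq : β ≤ q) :
    ((a ^ β + b ^ β) / 2) ^ (q / β) ≤ (a ^ q + b ^ q) / 2 := by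
  have h := add_div_two_rpow_le (rpow_nonneg ha β) (rpow_nonneg hb β)
    ((one_le_div hβ).2 hβq)
  rwa [← rpow_mul ha, ← rpow_mul hb, mul_div_cancel₀ _ hβ.ne'] at h

lemma rpow_sub_rpow_le_mul_sub {β q a b : ℝ} (hβ : 1 ≤ β) (hβq : β ≤ q) (hb : 0 ≤ b)
    (hba : b ≤ a) :
    a ^ β - b ^ β ≤ β * ((a ^ q + b ^ q) / 2) ^ ((β - 1) / q) * (a - b) := by
  have hβ₀ : 0 < β := by linarith
  have hq : 0 < q := by linarith
  have ha : 0 ≤ a := hb.trans hba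
  have hmean : ((a ^ β + b ^ β) / 2) ^ (1 - β⁻¹) ≤ ((a ^ q + b ^ q) / 2) ^ ((β - 1) / q) := by
    have h := rpow_le_rpow (by positivity) (rpow_mean_rpow_le ha hb hβ₀ hβq)
      (div_nonneg (by linarith) hq.le : 0 ≤ (β - 1) / q)
    rwa [← rpow_mul (by positivity), show q / β * ((β - 1) / q) = 1 - β⁻¹ by
      field_simp] at h
  calc a ^ β - b ^ β ≤ β * ((a ^ β + b ^ β) / 2) ^ (1 - β⁻¹) * (a - b) :=
        rpow_sub_rpow_le_mul_rpow_mean hβ hb hba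
    _ ≤ β * ((a ^ q + b ^ q) / 2) ^ ((β - 1) / q) * (a - b) := by
        gcongr

lemma rpow_add_rpow_le_mul_add {β q a c : ℝ} (hβ : 1 ≤ β) (hβq : β ≤ q) (ha : 0 ≤ a)
    (hc : 0 ≤ c) :
    a ^ β + c ^ β ≤ β * ((a ^ q + c ^ q) / 2) ^ ((β - 1) / q) * (a + c) := by
  have hq : 0 < q := by linarith
  set M := max a c
  have hM : 0 ≤ M := ha.trans (le_max_left a c)
  have hsplit : ∀ x, 0 ≤ x → x ≤ M → x ^ β ≤ x * M ^ (β - 1) := fun x hx hxM => by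
    rcases hx.eq_or_lt with rfl | hx
    · rw [zero_rpow (by linarith), zero_mul]
    · calc x ^ β = x * x ^ (β - 1) := by rw [rpow_sub_one hx.ne']; field_simp
        _ ≤ x * M ^ (β - 1) := by gcongr
  have hMq : M ^ q ≤ 2 * ((a ^ q + c ^ q) / 2) := by
    rcases max_cases a c with ⟨h, -⟩ | ⟨h, -⟩ <;> simp only [M, h] <;>
      linarith [rpow_nonneg ha q, rpow_nonneg hc q]
  have htwo : (2 : ℝ) ^ ((β - 1) / q) ≤ β :=
    (rpow_le_rpow_of_exponent_le one_le_two (by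
      calc (β - 1) / q ≤ (β - 1) / β := div_le_div_of_nonneg_left (by linarith) (by linarith) hβq
        _ = 1 - β⁻¹ := by field_simp)).trans (two_rpow_one_sub_inv_le hβ)
  calc a ^ β + c ^ β ≤ a * M ^ (β - 1) + c * M ^ (β - 1) :=
        add_le_add (hsplit a ha (le_max_left a c)) (hsplit c hc (le_max_right a c))
    _ = (M ^ q) ^ ((β - 1) / q) * (a + c) := by
        rw [← rpow_mul hM, mul_div_cancel₀ _ hq.ne']; ring
    _ ≤ (2 * ((a ^ q + c ^ q) / 2)) ^ ((β - 1) / q) * (a + c) := by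
        gcongr
    _ ≤ β * ((a ^ q + c ^ q) / 2) ^ ((β - 1) / q) * (a + c) := by
        rw [mul_rpow zero_le_two (by positivity)]
        gcongr

lemma rpow_mul_rpow_one_sub {x : ℝ} (hx : 0 ≤ x) (θ : ℝ) : x ^ θ * x ^ (1 - θ) = x := by
  rw [← rpow_add' hx (by norm_num), add_sub_cancel, rpow_one]

lemma rpow_sub_rpow_le_two_rpow_mul {α a b : ℝ} (hα₀ : 0 ≤ α) (hα₁ : α ≤ 1) (hb : 0 ≤ b)
    (hba : b ≤ a) : a ^ α - b ^ α ≤ 2 ^ (1 - α) * (a - b) ^ α := by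
  have hsub := rpow_add_le_add_rpow (sub_nonneg.2 hba) hb hα₀ hα₁
  rw [sub_add_cancel] at hsub
  have h2 : (1 : ℝ) ≤ 2 ^ (1 - α) := one_le_rpow one_le_two (by linarith)
  nlinarith [rpow_nonneg (sub_nonneg.2 hba) α]

lemma sum_rpow_mul_rpow_le {ι : Type*} (s : Finset ι) {u v : ι → ℝ} (hu : ∀ i ∈ s, 0 ≤ u i)
    (hv : ∀ i ∈ s, 0 ≤ v i) {θ : ℝ} (hθ₀ : 0 < θ) (hθ₁ : θ < 1) :
    ∑ i ∈ s, u i ^ θ * v i ^ (1 - θ) ≤ (∑ i ∈ s, u i) ^ θ * (∑ i ∈ s, v i) ^ (1 - θ) := by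
  have h := inner_le_Lp_mul_Lq_of_nonneg s (Real.HolderConjugate.inv_one_sub_inv hθ₀ hθ₁)
    (f := fun i => u i ^ θ) (g := fun i => v i ^ (1 - θ))
    (fun i hi => rpow_nonneg (hu i hi) θ) (fun i hi => rpow_nonneg (hv i hi) _)
  have hθ' : 1 - θ ≠ 0 := by linarith
  simp only [one_div, inv_inv] at h
  convert h using 3 <;> refine Finset.sum_congr rfl fun i hi => ?_
  · rw [← rpow_mul (hu i hi), mul_inv_cancel₀ hθ₀.ne', rpow_one]
  · rw [← rpow_mul (hv i hi), mul_inv_cancel₀ hθ', rpow_one]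

lemma add_rpow_mul_rpow_le {x₁ x₂ y₁ y₂ θ : ℝ} (hx₁ : 0 ≤ x₁) (hx₂ : 0 ≤ x₂) (hy₁ : 0 ≤ y₁)
    (hy₂ : 0 ≤ y₂) (hθ₀ : 0 < θ) (hθ₁ : θ < 1) :
    x₁ ^ θ * y₁ ^ (1 - θ) + x₂ ^ θ * y₂ ^ (1 - θ) ≤ (x₁ + x₂) ^ θ * (y₁ + y₂) ^ (1 - θ) := by
  simpa [Fin.sum_univ_two] using sum_rpow_mul_rpow_le Finset.univ (u := ![x₁, x₂])
    (v := ![y₁, y₂]) (by simp [Fin.forall_fin_two, hx₁, hx₂])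
    (by simp [Fin.forall_fin_two, hy₁, hy₂]) hθ₀ hθ₁

lemma mul_rpow_div_le_of_le {p q x y D : ℝ} (hp : 0 < p) (hpq : p ≤ q) (hx : 0 ≤ x) (hy : 0 ≤ y)
    (hD : 0 < D) (h : x ≤ (q / p) ^ p * D ^ (1 - p / q) * y ^ (p / q)) :
    p * (x / D) ^ (1 / p) ≤ q * (y / D) ^ (1 / q) := by
  have hq : 0 < q := hp.trans_le hpq
  have hxD : x / D ≤ (q / p) ^ p * (y / D) ^ (p / q) := by
    rw [rpow_sub hD, rpow_one] at h
    rw [div_le_iff₀ hD, div_rpow hy hD.le]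
    refine h.trans (le_of_eq ?_)
    field_simp
  have h1 := rpow_le_rpow (by positivity) hxD (by positivity : 0 ≤ 1 / p)
  rw [mul_rpow (by positivity) (by positivity), ← rpow_mul (by positivity),
    ← rpow_mul (by positivity), mul_one_div_cancel hp.ne', rpow_one,
    show p / q * (1 / p) = 1 / q by field_simp] at h1
  calc p * (x / D) ^ (1 / p) ≤ p * (q / p * (y / D) ^ (1 / q)) := by gcongr
    _ = q * (y / D) ^ (1 / q) := by field_simp

/-- The odd extension `t ↦ sign t * |t| ^ α` of `t ↦ t ^ α`. -/
noncomputable def signedRpow (α t : ℝ) : ℝ := max t 0 ^ α - max (-t) 0 ^ α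

section SignedRpow

variable {α β : ℝ}

lemma signedRpow_of_nonneg (hα : α ≠ 0) {t : ℝ} (ht : 0 ≤ t) : signedRpow α t = t ^ α := by
  rw [signedRpow, max_eq_left ht, max_eq_right (neg_nonpos.2 ht), zero_rpow hα, sub_zero]

lemma signedRpow_neg (α t : ℝ) : signedRpow α (-t) = -signedRpow α t := by
  rw [signedRpow, signedRpow, neg_neg, neg_sub]

lemma signedRpow_of_nonpos (hα : α ≠ 0) {t : ℝ} (ht : t ≤ 0) :
    signedRpow α t = -(-t) ^ α := by
  rw [← neg_neg t, signedRpow_neg, signedRpow_of_nonneg hα (neg_nonneg.2 ht), neg_neg]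

lemma abs_signedRpow (hα : α ≠ 0) (t : ℝ) : |signedRpow α t| = |t| ^ α := by
  rcases le_total 0 t with ht | ht
  · rw [signedRpow_of_nonneg hα ht, abs_of_nonneg ht, abs_of_nonneg (rpow_nonneg ht α)]
  · rw [signedRpow_of_nonpos hα ht, abs_neg, abs_of_nonpos ht,
      abs_of_nonneg (rpow_nonneg (neg_nonneg.2 ht) α)]

lemma abs_signedRpow_div_rpow {a b : ℝ} (ha : 0 < a) (hb : 0 < b) (t : ℝ) :
    |signedRpow (a / b) t| ^ b = |t| ^ a := by
  rw [abs_signedRpow (div_pos ha hb).ne', ← rpow_mul (abs_nonneg t), div_mul_cancel₀ a hb.ne']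

lemma signedRpow_one (t : ℝ) : signedRpow 1 t = t := by
  rcases le_total 0 t with ht | ht
  · rw [signedRpow_of_nonneg one_ne_zero ht, rpow_one]
  · rw [signedRpow_of_nonpos one_ne_zero ht, rpow_one, neg_neg]

lemma signedRpow_signedRpow (hα : 0 < α) (hβ : 0 < β) (t : ℝ) :
    signedRpow α (signedRpow β t) = signedRpow (β * α) t := by
  have hnonneg : ∀ s, 0 ≤ s → signedRpow α (signedRpow β s) = signedRpow (β * α) s :=
    fun s hs => by
      rw [signedRpow_of_nonneg hβ.ne' hs, signedRpow_of_nonneg hα.ne' (rpow_nonneg hs β),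
        signedRpow_of_nonneg (by positivity) hs, rpow_mul hs]
  rcases le_total 0 t with ht | ht
  · exact hnonneg t ht
  · obtain ⟨s, hs, rfl⟩ : ∃ s, 0 ≤ s ∧ t = -s := ⟨-t, by linarith, by ring⟩
    simp only [signedRpow_neg, hnonneg s hs]

lemma signedRpow_sign_mul {σ : ℝ} (hσ : σ = 1 ∨ σ = -1) (α t : ℝ) :
    signedRpow α (σ * t) = σ * signedRpow α t := by
  rcases hσ with rfl | rfl
  · rw [one_mul, one_mul]
  · rw [neg_one_mul, neg_one_mul, signedRpow_neg]

lemma continuous_signedRpow (hα : 0 < α) : Continuous (signedRpow α) := by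
  unfold signedRpow
  fun_prop (disch := exact hα.le)

lemma monotone_signedRpow (hα : 0 < α) : Monotone (signedRpow α) := fun s t hst => by
  unfold signedRpow
  gcongr

noncomputable def signedRpowHomeomorph (hα : 0 < α) : ℝ ≃ₜ ℝ where
  toFun := signedRpow α
  invFun := signedRpow α⁻¹
  left_inv t := by rw [signedRpow_signedRpow (inv_pos.2 hα) hα, mul_inv_cancel₀ hα.ne',
    signedRpow_one]
  right_inv t := by rw [signedRpow_signedRpow hα (inv_pos.2 hα), inv_mul_cancel₀ hα.ne',
    signedRpow_one]
  continuous_toFun := continuous_signedRpow hα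
  continuous_invFun := continuous_signedRpow (inv_pos.2 hα)

lemma abs_signedRpow_sub_le (hα : 0 < α) {C : ℝ → ℝ → ℝ} (hC_comm : ∀ a b, C a b = C b a)
    (hC_neg : ∀ a b, C (-a) (-b) = C a b)
    (hsame : ∀ a b, 0 ≤ b → b ≤ a → a ^ α - b ^ α ≤ C a b)
    (hopp : ∀ a c, 0 ≤ a → 0 ≤ c → a ^ α + c ^ α ≤ C a (-c)) (a b : ℝ) :
    |signedRpow α a - signedRpow α b| ≤ C a b := by
  have key : ∀ a b, b ≤ a → signedRpow α a - signedRpow α b ≤ C a b := fun a b hba => by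
    rcases le_or_gt 0 b with hb | hb
    · rw [signedRpow_of_nonneg hα.ne' (hb.trans hba), signedRpow_of_nonneg hα.ne' hb]
      exact hsame a b hb hba
    rcases le_or_gt 0 a with ha | ha
    · rw [signedRpow_of_nonneg hα.ne' ha, signedRpow_of_nonpos hα.ne' hb.le, sub_neg_eq_add]
      simpa using hopp a (-b) ha (by linarith)
    · rw [signedRpow_of_nonpos hα.ne' ha.le, signedRpow_of_nonpos hα.ne' hb.le,
        neg_sub_neg, ← hC_neg, hC_comm]
      exact hsame (-b) (-a) (by linarith) (by linarith)
  rcases le_total b a with hba | hab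
  · rw [abs_of_nonneg (sub_nonneg.2 (monotone_signedRpow hα hba))]
    exact key a b hba
  · rw [abs_sub_comm, abs_of_nonneg (sub_nonneg.2 (monotone_signedRpow hα hab)), hC_comm]
    exact key b a hab

end SignedRpow

lemma abs_signedRpow_sub_le_two_rpow_mul {α : ℝ} (hα₀ : 0 < α) (hα₁ : α ≤ 1) (a b : ℝ) :
    |signedRpow α a - signedRpow α b| ≤ 2 ^ (1 - α) * |a - b| ^ α := by
  refine abs_signedRpow_sub_le hα₀ (C := fun a b => 2 ^ (1 - α) * |a - b| ^ α)
    (fun a b => by rw [abs_sub_comm]) (fun a b => by rw [neg_sub_neg, abs_sub_comm])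
    (fun a b hb hba => ?_) (fun a c ha hc => ?_) a b
  · rw [abs_of_nonneg (sub_nonneg.2 hba)]
    exact rpow_sub_rpow_le_two_rpow_mul hα₀.le hα₁ hb hba
  · rw [sub_neg_eq_add, abs_of_nonneg (add_nonneg ha hc)]
    exact add_rpow_le_two_rpow_mul ha hc hα₀.le hα₁

lemma abs_signedRpow_sub_le_mul_abs_sub {β q : ℝ} (hβ : 1 ≤ β) (hβq : β ≤ q) (a b : ℝ) :
    |signedRpow β a - signedRpow β b| ≤
      β * ((|a| ^ q + |b| ^ q) / 2) ^ ((β - 1) / q) * |a - b| := by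
  refine abs_signedRpow_sub_le (by linarith)
    (C := fun a b => β * ((|a| ^ q + |b| ^ q) / 2) ^ ((β - 1) / q) * |a - b|)
    (fun a b => by rw [abs_sub_comm, add_comm]) (fun a b => by
      rw [neg_sub_neg, abs_sub_comm, abs_neg, abs_neg])
    (fun a b hb hba => ?_) (fun a c ha hc => ?_) a b
  · rw [abs_of_nonneg (sub_nonneg.2 hba), abs_of_nonneg hb, abs_of_nonneg (hb.trans hba)]
    exact rpow_sub_rpow_le_mul_sub hβ hβq hb hba
  · rw [sub_neg_eq_add, abs_of_nonneg (add_nonneg ha hc), abs_neg, abs_of_nonneg ha,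
      abs_of_nonneg hc]
    exact rpow_add_rpow_le_mul_add hβ hβq ha hc

lemma abs_signedRpow_div_sub_rpow_le {p q : ℝ} (hp : 0 < p) (hpq : p ≤ q) (a b : ℝ) :
    |signedRpow (p / q) a - signedRpow (p / q) b| ^ q ≤ 2 ^ (q - p) * |a - b| ^ p := by
  have hq : 0 < q := hp.trans_le hpq
  have h := rpow_le_rpow (abs_nonneg _)
    (abs_signedRpow_sub_le_two_rpow_mul (div_pos hp hq) ((div_le_one hq).2 hpq) a b) hq.le
  rwa [mul_rpow (by positivity) (by positivity), ← rpow_mul zero_le_two,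
    ← rpow_mul (abs_nonneg _), div_mul_cancel₀ p hq.ne', sub_mul, one_mul,
    div_mul_cancel₀ p hq.ne'] at h

lemma abs_signedRpow_div_sub_rpow_le_mul {p q : ℝ} (hp : 1 ≤ p) (hpq : p ≤ q) (a b : ℝ) :
    |signedRpow (q / p) a - signedRpow (q / p) b| ^ p ≤
      (q / p) ^ p * (|a - b| ^ q) ^ (p / q) * ((|a| ^ q + |b| ^ q) / 2) ^ (1 - p / q) := by
  have hp₀ : 0 < p := by linarith
  have hq : 0 < q := by linarith
  have hβ : 1 ≤ q / p := (one_le_div hp₀).2 hpq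
  have hβq : q / p ≤ q := div_le_self hq.le hp
  have h := rpow_le_rpow (abs_nonneg _) (abs_signedRpow_sub_le_mul_abs_sub hβ hβq a b) hp₀.le
  rw [mul_rpow (by positivity) (abs_nonneg _), mul_rpow (by positivity) (by positivity),
    ← rpow_mul (by positivity), show (q / p - 1) / q * p = 1 - p / q by field_simp] at h
  rw [← rpow_mul (abs_nonneg _), show q * (p / q) = p by field_simp]
  linarith

section SignedGraph

variable {V : Type} [Fintype V] (G : SimpleGraph V) (w sgn : V → V → ℝ) (μ κ : V → ℝ)

noncomputable def weightedDegree (i : V) : ℝ := ∑ j : V, if G.Adj i j then w i j else 0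

/-- The constant `𝒟` of the paper. -/
noncomputable def degreeBound : ℝ := ⨆ i : V, (2 * κ i + weightedDegree G w i) / (2 * μ i)

noncomputable def sgEnergy (p : ℝ) (f : V → ℝ) : ℝ :=
  sgEdgeSum G (fun i j => w i j * |f i - sgn i j * f j| ^ p) + ∑ i : V, κ i * |f i| ^ p

variable {G w sgn μ κ}

lemma sgEdgeSum_nonneg {F : V → V → ℝ} (hF : ∀ i j, G.Adj i j → 0 ≤ F i j) :
    0 ≤ sgEdgeSum G F := by
  unfold sgEdgeSum
  refine div_nonneg (Finset.sum_nonneg fun i _ => Finset.sum_nonneg fun j _ => ?_) zero_le_two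
  split_ifs with h
  exacts [hF i j h, le_rfl]

lemma sgEdgeSum_le_mul {F H : V → V → ℝ} {c : ℝ} (h : ∀ i j, G.Adj i j → F i j ≤ c * H i j) :
    sgEdgeSum G F ≤ c * sgEdgeSum G H := by
  unfold sgEdgeSum
  rw [← mul_div_assoc, Finset.mul_sum]
  gcongr with i _
  rw [Finset.mul_sum]
  gcongr with j _
  split_ifs with hij
  exacts [h i j hij, by rw [mul_zero]]

lemma sgEdgeSum_mean (hwsymm : ∀ i j, w i j = w j i) (φ : V → ℝ) :
    sgEdgeSum G (fun i j => w i j * ((φ i + φ j) / 2)) =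
      ∑ i : V, weightedDegree G w i * φ i / 2 := by
  have hswap : ∑ i : V, ∑ j : V, (if G.Adj i j then w i j * φ j else 0) =
      ∑ i : V, ∑ j : V, (if G.Adj i j then w i j * φ i else 0) := by
    rw [Finset.sum_comm]
    refine Finset.sum_congr rfl fun i _ => Finset.sum_congr rfl fun j _ => ?_
    rw [G.adj_comm, hwsymm]
  have hsplit : ∀ i j, (if G.Adj i j then w i j * ((φ i + φ j) / 2) else 0) =
      ((if G.Adj i j then w i j * φ i else 0) + (if G.Adj i j then w i j * φ j else 0)) / 2 :=
    fun i j => by split_ifs <;> ring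
  simp only [sgEdgeSum, weightedDegree, hsplit, ← Finset.sum_div, Finset.sum_add_distrib, hswap,
    Finset.sum_mul, ite_mul, zero_mul]
  ring

lemma sgEdgeSum_rpow_mul_rpow_le {F H : V → V → ℝ} (hF : ∀ i j, G.Adj i j → 0 ≤ F i j)
    (hH : ∀ i j, G.Adj i j → 0 ≤ H i j) {θ : ℝ} (hθ₀ : 0 < θ) (hθ₁ : θ < 1) :
    sgEdgeSum G (fun i j => F i j ^ θ * H i j ^ (1 - θ)) ≤
      sgEdgeSum G F ^ θ * sgEdgeSum G H ^ (1 - θ) := by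
  have hterm : ∀ i j, (if G.Adj i j then F i j ^ θ * H i j ^ (1 - θ) else 0) =
      (if G.Adj i j then F i j else 0) ^ θ * (if G.Adj i j then H i j else 0) ^ (1 - θ) :=
    fun i j => by
      split_ifs
      · rfl
      · rw [zero_rpow hθ₀.ne', zero_mul]
  have hHolder := sum_rpow_mul_rpow_le Finset.univ
    (u := fun z : V × V => if G.Adj z.1 z.2 then F z.1 z.2 else 0)
    (v := fun z : V × V => if G.Adj z.1 z.2 then H z.1 z.2 else 0)
    (fun z _ => by split_ifs with h; exacts [hF _ _ h, le_rfl])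
    (fun z _ => by split_ifs with h; exacts [hH _ _ h, le_rfl]) hθ₀ hθ₁
  simp only [Fintype.sum_prod_type] at hHolder
  have hX : 0 ≤ ∑ i : V, ∑ j : V, if G.Adj i j then F i j else 0 :=
    Finset.sum_nonneg fun i _ => Finset.sum_nonneg fun j _ => by
      split_ifs with h; exacts [hF _ _ h, le_rfl]
  have hY : 0 ≤ ∑ i : V, ∑ j : V, if G.Adj i j then H i j else 0 :=
    Finset.sum_nonneg fun i _ => Finset.sum_nonneg fun j _ => by
      split_ifs with h; exacts [hH _ _ h, le_rfl]
  simp only [sgEdgeSum, hterm]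
  rw [div_rpow hX zero_le_two, div_rpow hY zero_le_two, rpow_sub two_pos, rpow_one]
  have h2 : (0 : ℝ) < 2 ^ θ := by positivity
  field_simp
  linarith


lemma sgRayleigh_of_mem_pSphere {p : ℝ} {f : V → ℝ} (hf : f ∈ pSphere μ p) :
    sgRayleigh G w sgn μ κ p f = sgEnergy G w sgn κ p f := by
  rw [sgRayleigh, show ∑ i : V, μ i * |f i| ^ p = 1 from hf, div_one, sgEnergy]

lemma sgEnergy_nonneg (hw : ∀ i j, G.Adj i j → 0 ≤ w i j) (hκ : ∀ i, 0 ≤ κ i) (p : ℝ)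
    (f : V → ℝ) : 0 ≤ sgEnergy G w sgn κ p f :=
  add_nonneg (sgEdgeSum_nonneg fun i j hij => mul_nonneg (hw i j hij) (by positivity))
    (Finset.sum_nonneg fun i _ => mul_nonneg (hκ i) (by positivity))

lemma sgRayleigh_nonneg (hw : ∀ i j, G.Adj i j → 0 ≤ w i j) (hμ : ∀ i, 0 ≤ μ i)
    (hκ : ∀ i, 0 ≤ κ i) (p : ℝ) (f : V → ℝ) : 0 ≤ sgRayleigh G w sgn μ κ p f :=
  div_nonneg (sgEnergy_nonneg hw hκ p f)
    (Finset.sum_nonneg fun i _ => mul_nonneg (hμ i) (by positivity))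

lemma degreeBound_nonneg (hw : ∀ i j, G.Adj i j → 0 ≤ w i j) (hμ : ∀ i, 0 ≤ μ i)
    (hκ : ∀ i, 0 ≤ κ i) : 0 ≤ degreeBound G w μ κ := by
  refine Real.iSup_nonneg fun i => div_nonneg ?_ (by linarith [hμ i])
  have : 0 ≤ weightedDegree G w i := Finset.sum_nonneg fun j _ => by
    split_ifs with h; exacts [hw i j h, le_rfl]
  linarith [hκ i]

lemma sgEdgeSum_mean_add_le_degreeBound (hwsymm : ∀ i j, w i j = w j i) (hμ : ∀ i, 0 < μ i)
    {φ : V → ℝ} (hφ : ∀ i, 0 ≤ φ i) :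
    sgEdgeSum G (fun i j => w i j * ((φ i + φ j) / 2)) + ∑ i : V, κ i * φ i ≤
      degreeBound G w μ κ * ∑ i : V, μ i * φ i := by
  rw [sgEdgeSum_mean hwsymm, ← Finset.sum_add_distrib, Finset.mul_sum]
  refine Finset.sum_le_sum fun i _ => ?_
  have hi : (2 * κ i + weightedDegree G w i) / (2 * μ i) ≤ degreeBound G w μ κ :=
    le_ciSup (f := fun i => (2 * κ i + weightedDegree G w i) / (2 * μ i))
      (Set.finite_range _).bddAbove i
  rw [div_le_iff₀ (by linarith [hμ i])] at hi
  nlinarith [hφ i]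

lemma sgRayleigh_le_two_rpow_mul_degreeBound (hw : ∀ i j, G.Adj i j → 0 ≤ w i j)
    (hwsymm : ∀ i j, w i j = w j i) (hsgn : ∀ i j, G.Adj i j → sgn i j = 1 ∨ sgn i j = -1)
    (hμ : ∀ i, 0 < μ i) (hκ : ∀ i, 0 ≤ κ i) {p : ℝ} (hp : 1 ≤ p) {f : V → ℝ}
    (hf : f ∈ pSphere μ p) : sgRayleigh G w sgn μ κ p f ≤ 2 ^ p * degreeBound G w μ κ := by
  have h2p : (1 : ℝ) ≤ 2 ^ p := one_le_rpow one_le_two (by linarith)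
  have hedge : ∀ i j, G.Adj i j → w i j * |f i - sgn i j * f j| ^ p ≤
      2 ^ p * (w i j * ((|f i| ^ p + |f j| ^ p) / 2)) := fun i j hij => by
    have htri : |f i - sgn i j * f j| ≤ |f i| + |f j| := by
      rcases hsgn i j hij with h | h <;> rw [h]
      · simpa using abs_sub (f i) (f j)
      · simpa using abs_add_le (f i) (f j)
    have hconv := add_div_two_rpow_le (abs_nonneg (f i)) (abs_nonneg (f j)) hp
    rw [div_rpow (by positivity) zero_le_two] at hconv
    have := rpow_le_rpow (abs_nonneg _) htri (by linarith : 0 ≤ p)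
    have h2 : (0 : ℝ) < 2 ^ p := by positivity
    rw [div_le_iff₀ h2] at hconv
    nlinarith [hw i j hij]
  have hvertex : 0 ≤ ∑ i : V, κ i * |f i| ^ p :=
    Finset.sum_nonneg fun i _ => mul_nonneg (hκ i) (by positivity)
  have hdeg := sgEdgeSum_mean_add_le_degreeBound (G := G) (κ := κ) hwsymm hμ
    (φ := fun i => |f i| ^ p) fun i => by positivity
  rw [show ∑ i : V, μ i * |f i| ^ p = 1 from hf, mul_one] at hdeg
  rw [sgRayleigh_of_mem_pSphere hf, sgEnergy]
  nlinarith [sgEdgeSum_le_mul (c := 2 ^ p) hedge]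

end SignedGraph

section Genus

variable {V : Type}

lemma hasOddMapInto_of_image {h : (V → ℝ) → (V → ℝ)} (hcont : Continuous h)
    (hodd : ∀ f, h (-f) = -h f) {B : Set (V → ℝ)} {m : ℕ} (hB : hasOddMapInto (h '' B) m) :
    hasOddMapInto B m := by
  obtain ⟨g, hg_cont, hg_ne, hg_odd⟩ := hB
  refine ⟨g ∘ h, hg_cont.comp hcont.continuousOn (Set.mapsTo_image h B),
    fun f hf => hg_ne _ (Set.mem_image_of_mem h hf), fun f hf => ?_⟩
  rw [Function.comp_apply, hodd, hg_odd _ (Set.mem_image_of_mem h hf), Function.comp_apply]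

lemma genusGe_image {h : (V → ℝ) → (V → ℝ)} (hcont : Continuous h) (hodd : ∀ f, h (-f) = -h f)
    {B : Set (V → ℝ)} {k : ℕ} (hB : genusGe B k) : genusGe (h '' B) k :=
  fun m hm hmap => hB m hm (hasOddMapInto_of_image hcont hodd hmap)

lemma image_mem_genusFamily [Fintype V] {μ : V → ℝ} {a b : ℝ} {k : ℕ} (e : (V → ℝ) ≃ₜ (V → ℝ))
    (he_odd : ∀ f, e (-f) = -e f) (he_sphere : Set.MapsTo e (pSphere μ a) (pSphere μ b))
    {B : Set (V → ℝ)} (hB : B ∈ genusFamily μ a k) : e '' B ∈ genusFamily μ b k := by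
  obtain ⟨hB_sphere, hB_closed, hB_symm, hB_genus⟩ := hB
  refine ⟨he_sphere.mono_left hB_sphere |>.image_subset, e.isClosedMap B hB_closed, ?_,
    genusGe_image e.continuous he_odd hB_genus⟩
  rintro _ ⟨f, hf, rfl⟩
  exact ⟨-f, hB_symm f hf, he_odd f⟩

end Genus

section SignedRpowPi

variable {V : Type}

noncomputable def signedRpowPi (α : ℝ) (f : V → ℝ) : V → ℝ := fun i => signedRpow α (f i)

lemma signedRpowPi_neg (α : ℝ) (f : V → ℝ) : signedRpowPi α (-f) = -signedRpowPi α f :=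
  funext fun i => signedRpow_neg α (f i)

lemma signedRpowPi_mapsTo_pSphere [Fintype V] {μ : V → ℝ} {a b : ℝ} (ha : 0 < a) (hb : 0 < b) :
    Set.MapsTo (signedRpowPi (a / b)) (pSphere μ a) (pSphere μ b) := fun f hf => by
  change ∑ i : V, μ i * |signedRpow (a / b) (f i)| ^ b = 1
  simp only [abs_signedRpow_div_rpow ha hb]
  exact hf

lemma signedRpowPi_image_mem_genusFamily [Fintype V] {μ : V → ℝ} {a b : ℝ} (ha : 0 < a)
    (hb : 0 < b) {k : ℕ} {B : Set (V → ℝ)} (hB : B ∈ genusFamily μ a k) :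
    signedRpowPi (a / b) '' B ∈ genusFamily μ b k :=
  image_mem_genusFamily (Homeomorph.piCongrRight fun _ => signedRpowHomeomorph (div_pos ha hb))
    (signedRpowPi_neg _) (signedRpowPi_mapsTo_pSphere ha hb) hB

end SignedRpowPi

section Comparison

variable {V : Type} [Fintype V] {G : SimpleGraph V} {w sgn : V → V → ℝ} {μ κ : V → ℝ}

lemma sgRayleigh_signedRpowPi_le_two_rpow_mul (hw : ∀ i j, G.Adj i j → 0 ≤ w i j)
    (hsgn : ∀ i j, G.Adj i j → sgn i j = 1 ∨ sgn i j = -1) (hκ : ∀ i, 0 ≤ κ i) {p q : ℝ}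
    (hp : 0 < p) (hpq : p ≤ q) {f : V → ℝ} (hf : f ∈ pSphere μ p) :
    sgRayleigh G w sgn μ κ q (signedRpowPi (p / q) f) ≤
      2 ^ (q - p) * sgRayleigh G w sgn μ κ p f := by
  have hq : 0 < q := hp.trans_le hpq
  rw [sgRayleigh_of_mem_pSphere (signedRpowPi_mapsTo_pSphere hp hq hf),
    sgRayleigh_of_mem_pSphere hf, sgEnergy, sgEnergy]
  have hedge := sgEdgeSum_le_mul (G := G) (c := 2 ^ (q - p))
    (F := fun i j => w i j * |signedRpowPi (p / q) f i -
      sgn i j * signedRpowPi (p / q) f j| ^ q)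
    (H := fun i j => w i j * |f i - sgn i j * f j| ^ p) fun i j hij => by
      dsimp only [signedRpowPi]
      rw [← signedRpow_sign_mul (hsgn i j hij), mul_left_comm]
      exact mul_le_mul_of_nonneg_left (abs_signedRpow_div_sub_rpow_le hp hpq _ _) (hw i j hij)
  have hvertex : ∑ i : V, κ i * |signedRpowPi (p / q) f i| ^ q =
      ∑ i : V, κ i * |f i| ^ p := by
    simp only [signedRpowPi, abs_signedRpow_div_rpow hp hq]
  have h2 : (1 : ℝ) ≤ 2 ^ (q - p) := one_le_rpow one_le_two (by linarith)
  have hK : 0 ≤ ∑ i : V, κ i * |f i| ^ p :=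
    Finset.sum_nonneg fun i _ => mul_nonneg (hκ i) (by positivity)
  rw [hvertex, mul_add]
  nlinarith

lemma sgEdgeSum_signedRpow_le (hw : ∀ i j, G.Adj i j → 0 ≤ w i j)
    (hsgn : ∀ i j, G.Adj i j → sgn i j = 1 ∨ sgn i j = -1) {p q : ℝ} (hp : 1 ≤ p)
    (hpq : p < q) (g : V → ℝ) :
    sgEdgeSum G (fun i j =>
        w i j * |signedRpow (q / p) (g i) - sgn i j * signedRpow (q / p) (g j)| ^ p) ≤
      (q / p) ^ p * (sgEdgeSum G (fun i j => w i j * |g i - sgn i j * g j| ^ q) ^ (p / q) *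
        sgEdgeSum G (fun i j => w i j * ((|g i| ^ q + |g j| ^ q) / 2)) ^ (1 - p / q)) := by
  have hq : 0 < q := by linarith
  have hθ₀ : 0 < p / q := by positivity
  have hθ₁ : p / q < 1 := (div_lt_one hq).2 hpq
  refine (sgEdgeSum_le_mul fun i j hij => ?_).trans (mul_le_mul_of_nonneg_left
    (sgEdgeSum_rpow_mul_rpow_le (fun i j hij => mul_nonneg (hw i j hij) (by positivity))
      (fun i j hij => mul_nonneg (hw i j hij) (by positivity)) hθ₀ hθ₁) (by positivity))
  have hwij := hw i j hij
  have hσ : |sgn i j * g j| = |g j| := by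
    rcases hsgn i j hij with h | h <;> simp [h]
  have h := abs_signedRpow_div_sub_rpow_le_mul hp hpq.le (g i) (sgn i j * g j)
  rw [hσ, signedRpow_sign_mul (hsgn i j hij)] at h
  calc w i j * |signedRpow (q / p) (g i) - sgn i j * signedRpow (q / p) (g j)| ^ p
      ≤ w i j * ((q / p) ^ p * (|g i - sgn i j * g j| ^ q) ^ (p / q) *
          ((|g i| ^ q + |g j| ^ q) / 2) ^ (1 - p / q)) := by gcongr
    _ = (q / p) ^ p * ((w i j * |g i - sgn i j * g j| ^ q) ^ (p / q) *
          (w i j * ((|g i| ^ q + |g j| ^ q) / 2)) ^ (1 - p / q)) := by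
        rw [mul_rpow hwij (by positivity), mul_rpow hwij (by positivity)]
        nth_rewrite 1 [← rpow_mul_rpow_one_sub hwij (p / q)]
        ring

lemma sgRayleigh_signedRpowPi_le (hw : ∀ i j, G.Adj i j → 0 ≤ w i j)
    (hwsymm : ∀ i j, w i j = w j i) (hsgn : ∀ i j, G.Adj i j → sgn i j = 1 ∨ sgn i j = -1)
    (hμ : ∀ i, 0 < μ i) (hκ : ∀ i, 0 ≤ κ i) {p q : ℝ} (hp : 1 ≤ p) (hpq : p < q)
    {g : V → ℝ} (hg : g ∈ pSphere μ q) :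
    sgRayleigh G w sgn μ κ p (signedRpowPi (q / p) g) ≤
      (q / p) ^ p * degreeBound G w μ κ ^ (1 - p / q) *
        sgRayleigh G w sgn μ κ q g ^ (p / q) := by
  have hp₀ : 0 < p := by linarith
  have hq : 0 < q := by linarith
  have hθ₀ : 0 < p / q := by positivity
  have hθ₁ : p / q < 1 := (div_lt_one hq).2 hpq
  rw [sgRayleigh_of_mem_pSphere (signedRpowPi_mapsTo_pSphere hq hp₀ hg),
    sgRayleigh_of_mem_pSphere hg, sgEnergy, sgEnergy]
  dsimp only [signedRpowPi]
  set A₁ := sgEdgeSum G (fun i j => w i j * |g i - sgn i j * g j| ^ q)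
  set A₂ := ∑ i : V, κ i * |g i| ^ q
  set B₁ := sgEdgeSum G (fun i j => w i j * ((|g i| ^ q + |g j| ^ q) / 2))
  have hA₁ : 0 ≤ A₁ := sgEdgeSum_nonneg fun i j hij => mul_nonneg (hw i j hij) (by positivity)
  have hA₂ : 0 ≤ A₂ := Finset.sum_nonneg fun i _ => mul_nonneg (hκ i) (by positivity)
  have hB₁ : 0 ≤ B₁ := sgEdgeSum_nonneg fun i j hij => mul_nonneg (hw i j hij) (by positivity)
  have hvertex : ∑ i : V, κ i * |signedRpow (q / p) (g i)| ^ p = A₂ := by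
    simp only [abs_signedRpow_div_rpow hq hp₀, A₂]
  have hdeg : B₁ + A₂ ≤ degreeBound G w μ κ := by
    have h := sgEdgeSum_mean_add_le_degreeBound (G := G) (κ := κ) hwsymm hμ
      (φ := fun i => |g i| ^ q) fun i => by positivity
    rwa [show ∑ i : V, μ i * |g i| ^ q = 1 from hg, mul_one] at h
  have hβ : 1 ≤ (q / p) ^ p := one_le_rpow ((one_le_div hp₀).2 hpq.le) hp₀.le
  have hAB : 0 ≤ A₁ ^ (p / q) * B₁ ^ (1 - p / q) := by positivity
  rw [hvertex]
  calc _ ≤ (q / p) ^ p * (A₁ ^ (p / q) * B₁ ^ (1 - p / q)) + A₂ :=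
        add_le_add_left (sgEdgeSum_signedRpow_le hw hsgn hp hpq g) _
    _ ≤ (q / p) ^ p * (A₁ ^ (p / q) * B₁ ^ (1 - p / q) + A₂ ^ (p / q) * A₂ ^ (1 - p / q)) := by
        rw [rpow_mul_rpow_one_sub hA₂]
        nlinarith
    _ ≤ (q / p) ^ p * ((A₁ + A₂) ^ (p / q) * (B₁ + A₂) ^ (1 - p / q)) := by
        gcongr
        exact add_rpow_mul_rpow_le hA₁ hA₂ hB₁ hA₂ hθ₀ hθ₁
    _ ≤ (q / p) ^ p * ((A₁ + A₂) ^ (p / q) * degreeBound G w μ κ ^ (1 - p / q)) := by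
        gcongr
    _ = _ := by ring

end Comparison

lemma sInf_sSup_image_le_mul_rpow {α : Type*} {Ra Rb : α → ℝ} {S : Set α}
    {Fa Fb : Set (Set α)} {c θ : ℝ} (Φ : α → α) (hRa : ∀ x, 0 ≤ Ra x) (hRb : ∀ x, 0 ≤ Rb x)
    (hbdd : BddAbove (Ra '' S)) (hFa : ∀ B ∈ Fa, B ⊆ S) (hmap : ∀ B ∈ Fa, Φ '' B ∈ Fb)
    (hne : Fb.Nonempty → Fa.Nonempty) (hc : 0 < c) (hθ : 0 < θ)
    (hR : ∀ x ∈ S, Rb (Φ x) ≤ c * Ra x ^ θ) :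
    sInf ((fun B => sSup (Rb '' B)) '' Fb) ≤ c * sInf ((fun B => sSup (Ra '' B)) '' Fa) ^ θ := by
  have hsup : ∀ R : α → ℝ, (∀ x, 0 ≤ R x) → ∀ B : Set α, 0 ≤ sSup (R '' B) :=
    fun R hR B => Real.sSup_nonneg (by rintro _ ⟨x, -, rfl⟩; exact hR x)
  have hvalues : ∀ R : α → ℝ, (∀ x, 0 ≤ R x) → ∀ F : Set (Set α),
      ∀ y ∈ (fun B => sSup (R '' B)) '' F, 0 ≤ y := by
    rintro R hR F _ ⟨B, -, rfl⟩
    exact hsup R hR B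
  have hinf_a := Real.sInf_nonneg (hvalues Ra hRa Fa)
  have hinf_b := Real.sInf_nonneg (hvalues Rb hRb Fb)
  rcases Fb.eq_empty_or_nonempty with hFb | hFb
  · rw [hFb, Set.image_empty, Real.sInf_empty]
    positivity
  have hkey : ∀ B ∈ Fa,
      sInf ((fun B => sSup (Rb '' B)) '' Fb) ≤ c * sSup (Ra '' B) ^ θ := fun B hB => by
    have := hsup Ra hRa B
    refine (csInf_le ⟨0, hvalues Rb hRb Fb⟩ ⟨_, hmap B hB, rfl⟩).trans
      (Real.sSup_le ?_ (by positivity))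
    rintro _ ⟨_, ⟨x, hx, rfl⟩, rfl⟩
    refine (hR x (hFa B hB hx)).trans ?_
    gcongr
    · exact hRa x
    · exact le_csSup (hbdd.mono (Set.image_mono (hFa B hB))) ⟨x, hx, rfl⟩
  have hinv : (sInf ((fun B => sSup (Rb '' B)) '' Fb) / c) ^ θ⁻¹ ≤
      sInf ((fun B => sSup (Ra '' B)) '' Fa) := by
    refine le_csInf ((hne hFb).image _) ?_
    rintro _ ⟨B, hB, rfl⟩
    rw [rpow_inv_le_iff_of_pos (by positivity) (hsup Ra hRa B) hθ, div_le_iff₀' hc]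
    exact hkey B hB
  rwa [rpow_inv_le_iff_of_pos (by positivity) hinf_a hθ, div_le_iff₀' hc] at hinv

section Eigenvalues

variable {V : Type} [Fintype V] {G : SimpleGraph V} {w sgn : V → V → ℝ} {μ κ : V → ℝ}

lemma varEig_nonneg (hw : ∀ i j, G.Adj i j → 0 ≤ w i j) (hμ : ∀ i, 0 ≤ μ i)
    (hκ : ∀ i, 0 ≤ κ i) (p : ℝ) (k : ℕ) : 0 ≤ varEig G w sgn μ κ p k := by
  refine Real.sInf_nonneg ?_
  rintro _ ⟨B, -, rfl⟩
  exact Real.sSup_nonneg (by rintro _ ⟨f, -, rfl⟩; exact sgRayleigh_nonneg hw hμ hκ p f)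

lemma varEig_le_mul_rpow (hw : ∀ i j, G.Adj i j → 0 ≤ w i j) (hwsymm : ∀ i j, w i j = w j i)
    (hsgn : ∀ i j, G.Adj i j → sgn i j = 1 ∨ sgn i j = -1) (hμ : ∀ i, 0 < μ i)
    (hκ : ∀ i, 0 ≤ κ i) {a b c θ : ℝ} (ha : 1 ≤ a) (hb : 0 < b) (hc : 0 < c) (hθ : 0 < θ)
    (k : ℕ) (hR : ∀ f ∈ pSphere μ a,
      sgRayleigh G w sgn μ κ b (signedRpowPi (a / b) f) ≤ c * sgRayleigh G w sgn μ κ a f ^ θ) :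
    varEig G w sgn μ κ b k ≤ c * varEig G w sgn μ κ a k ^ θ := by
  have ha₀ : 0 < a := by linarith
  refine sInf_sSup_image_le_mul_rpow (S := pSphere μ a) _
    (sgRayleigh_nonneg hw (fun i => (hμ i).le) hκ a)
    (sgRayleigh_nonneg hw (fun i => (hμ i).le) hκ b)
    ⟨_, Set.forall_mem_image.2 fun f hf =>
      sgRayleigh_le_two_rpow_mul_degreeBound hw hwsymm hsgn hμ hκ ha hf⟩
    (fun B hB => hB.1) (fun B hB => signedRpowPi_image_mem_genusFamily ha₀ hb hB) ?_ hc hθ hR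
  rintro ⟨B, hB⟩
  exact ⟨_, signedRpowPi_image_mem_genusFamily hb ha₀ hB⟩

theorem two_rpow_neg_mul_varEig_le (hw : ∀ i j, G.Adj i j → 0 ≤ w i j)
    (hwsymm : ∀ i j, w i j = w j i) (hsgn : ∀ i j, G.Adj i j → sgn i j = 1 ∨ sgn i j = -1)
    (hμ : ∀ i, 0 < μ i) (hκ : ∀ i, 0 ≤ κ i) {p q : ℝ} (hp : 1 ≤ p) (hpq : p ≤ q) (k : ℕ) :
    (2 : ℝ) ^ (-q) * varEig G w sgn μ κ q k ≤ (2 : ℝ) ^ (-p) * varEig G w sgn μ κ p k := by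
  have hp₀ : 0 < p := by linarith
  have h := varEig_le_mul_rpow hw hwsymm hsgn hμ hκ hp (hp₀.trans_le hpq)
    (c := 2 ^ (q - p)) (by positivity) one_pos k fun f hf => by
      rw [rpow_one]
      exact sgRayleigh_signedRpowPi_le_two_rpow_mul hw hsgn hκ hp₀ hpq hf
  rw [rpow_one] at h
  calc (2 : ℝ) ^ (-q) * varEig G w sgn μ κ q k
      ≤ 2 ^ (-q) * (2 ^ (q - p) * varEig G w sgn μ κ p k) := by gcongr
    _ = 2 ^ (-p) * varEig G w sgn μ κ p k := by
      rw [← mul_assoc, ← rpow_add two_pos, show -q + (q - p) = -p by ring]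

theorem mul_rpow_varEig_div_degreeBound_le (hw : ∀ i j, G.Adj i j → 0 ≤ w i j)
    (hwsymm : ∀ i j, w i j = w j i) (hsgn : ∀ i j, G.Adj i j → sgn i j = 1 ∨ sgn i j = -1)
    (hμ : ∀ i, 0 < μ i) (hκ : ∀ i, 0 ≤ κ i) {p q : ℝ} (hp : 1 ≤ p) (hpq : p ≤ q) (k : ℕ) :
    p * (varEig G w sgn μ κ p k / degreeBound G w μ κ) ^ (1 / p) ≤
      q * (varEig G w sgn μ κ q k / degreeBound G w μ κ) ^ (1 / q) := by
  have hp₀ : 0 < p := by linarith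
  rcases hpq.eq_or_lt with rfl | hpq
  · exact le_rfl
  have hq₀ : 0 < q := hp₀.trans hpq
  rcases (degreeBound_nonneg hw (fun i => (hμ i).le) hκ).eq_or_lt with hD | hD
  · rw [← hD, div_zero, div_zero, zero_rpow (one_div_pos.2 hp₀).ne',
      zero_rpow (one_div_pos.2 hq₀).ne', mul_zero, mul_zero]
  have h := varEig_le_mul_rpow hw hwsymm hsgn hμ hκ (hp.trans hpq.le) hp₀
    (c := (q / p) ^ p * degreeBound G w μ κ ^ (1 - p / q))
    (mul_pos (rpow_pos_of_pos (div_pos hq₀ hp₀) p) (rpow_pos_of_pos hD _)) (div_pos hp₀ hq₀) k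
    fun g hg => sgRayleigh_signedRpowPi_le hw hwsymm hsgn hμ hκ hp hpq hg
  exact mul_rpow_div_le_of_le hp₀ hpq.le (varEig_nonneg hw (fun i => (hμ i).le) hκ p k)
    (varEig_nonneg hw (fun i => (hμ i).le) hκ q k) hD h

end Eigenvalues

theorem monotonicity_of_variational_eigenvalues_general
    {V : Type} [Fintype V]
    (G : SimpleGraph V) (w sgn : V → V → ℝ) (μ κ : V → ℝ)
    (hw : ∀ i j, G.Adj i j → 0 < w i j) (hwsymm : ∀ i j, w i j = w j i)
    (hsgn : ∀ i j, G.Adj i j → sgn i j = 1 ∨ sgn i j = -1)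
    (hμ : ∀ i, 0 < μ i) (hκ : ∀ i, 0 ≤ κ i)
    (p q : ℝ) (hp : 1 < p) (hpq : p ≤ q)
    (k : ℕ) :
    (2 : ℝ) ^ (-q) * varEig G w sgn μ κ q k ≤ (2 : ℝ) ^ (-p) * varEig G w sgn μ κ p k ∧
    p * (varEig G w sgn μ κ p k /
        (⨆ i : V, (2 * κ i + ∑ j : V, if G.Adj i j then w i j else 0) / (2 * μ i))) ^ (1 / p)
      ≤ q * (varEig G w sgn μ κ q k /
        (⨆ i : V, (2 * κ i + ∑ j : V, if G.Adj i j then w i j else 0) / (2 * μ i))) ^ (1 / q) := by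
  have hw₀ : ∀ i j, G.Adj i j → 0 ≤ w i j := fun i j hij => (hw i j hij).le
  exact ⟨two_rpow_neg_mul_varEig_le hw₀ hwsymm hsgn hμ hκ hp.le hpq k,
    mul_rpow_varEig_div_degreeBound_le hw₀ hwsymm hsgn hμ hκ hp.le hpq k⟩

/-- **Monotonicity of variational eigenvalues** (Theorem `thm:Monotonicity`).
For a signed graph with nonnegative potential and `1 < p ≤ q`,
`2^{-p} λ_k^{(p)} ≥ 2^{-q} λ_k^{(q)}` and
`p (λ_k^{(p)}/𝒟)^{1/p} ≤ q (λ_k^{(q)}/𝒟)^{1/q}`, where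
`𝒟 = max_i (2κ_i + ∑_{j∼i} w_{ij})/(2μ_i)`. -/
theorem monotonicity_of_variational_eigenvalues
    {V : Type} [Fintype V] [DecidableEq V] (n : ℕ) (hn : Fintype.card V = n)
    (G : SimpleGraph V) (w sgn : V → V → ℝ) (μ κ : V → ℝ)
    (hw : ∀ i j, G.Adj i j → 0 < w i j) (hwsymm : ∀ i j, w i j = w j i)
    (hsgn : ∀ i j, G.Adj i j → sgn i j = 1 ∨ sgn i j = -1)
    (hsgnsymm : ∀ i j, sgn i j = sgn j i)
    (hμ : ∀ i, 0 < μ i) (hκ : ∀ i, 0 ≤ κ i)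
    (p q : ℝ) (hp : 1 < p) (hpq : p ≤ q)
    (k : ℕ) (hk1 : 1 ≤ k) (hkn : k ≤ n) :
    (2 : ℝ) ^ (-q) * varEig G w sgn μ κ q k ≤ (2 : ℝ) ^ (-p) * varEig G w sgn μ κ p k ∧
    p * (varEig G w sgn μ κ p k /
        (⨆ i : V, (2 * κ i + ∑ j : V, if G.Adj i j then w i j else 0) / (2 * μ i))) ^ (1 / p)
      ≤ q * (varEig G w sgn μ κ q k /
        (⨆ i : V, (2 * κ i + ∑ j : V, if G.Adj i j then w i j else 0) / (2 * μ i))) ^ (1 / q) :=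
  monotonicity_of_variational_eigenvalues_general G w sgn μ κ hw hwsymm hsgn hμ hκ p q hp hpq k
end

section
/- For every real t≥1, all a,b∈ℝ, and every σ∈{−1,+1}, one has | |b|^t·sign(b) − σ·|a|^t·sign(a) | ≥ |b−σa|·((|b|^t+|a|^t)/2)^{1−1/t}. -/
lemma pm2 {t u v : ℝ} (ht : 1 ≤ t) (hu : 0 ≤ u) (hv : 0 ≤ v) :
    ((u + v) / 2) ^ t ≤ (u ^ t + v ^ t) / 2 := by
  lift u to NNReal using hu
  lift v to NNReal using hv
  have h := NNReal.rpow_arith_mean_le_arith_mean2_rpow (1/2) (1/2) u v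
    (by apply NNReal.coe_injective; push_cast; norm_num) ht
  have h' := (NNReal.coe_le_coe).2 h
  push_cast at h'
  have e1 : ((u:ℝ) + v) / 2 = 1/2 * u + 1/2 * v := by ring
  have e2 : ((u:ℝ) ^ t + v ^ t) / 2 = 1/2 * (u:ℝ)^t + 1/2 * (v:ℝ)^t := by ring
  rw [e1, e2]; exact h'

lemma key1 {t : ℝ} (ht : 1 ≤ t) {u v : ℝ} (hu : 0 ≤ u) (huv : u ≤ v) :
    (v - u) * ((v ^ t + u ^ t) / 2) ^ (1 - 1 / t) ≤ v ^ t - u ^ t := by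
  have ht0 : (0:ℝ) < t := lt_of_lt_of_le one_pos ht
  have hv : 0 ≤ v := hu.trans huv
  have he : 0 ≤ 1 - 1/t := by
    have : 1/t ≤ 1 := by rw [div_le_one ht0]; exact ht
    linarith
  rcases eq_or_lt_of_le hv with hv0 | hv0
  · have hu0 : u = 0 := le_antisymm (huv.trans hv0.symm.le) hu
    simp [← hv0, hu0]
  · have hM : (0:ℝ) ≤ (v ^ t + u ^ t) / 2 := by positivity
    have hMle : (v ^ t + u ^ t) / 2 ≤ v ^ t := by
      have : u ^ t ≤ v ^ t := Real.rpow_le_rpow hu huv ht0.le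
      linarith
    have h1 : ((v ^ t + u ^ t) / 2) ^ (1 - 1/t) ≤ (v ^ t) ^ (1 - 1/t) :=
      Real.rpow_le_rpow hM hMle he
    have h2 : (v ^ t) ^ (1 - 1/t) = v ^ (t - 1) := by
      rw [← Real.rpow_mul hv]
      congr 1
      field_simp
    rw [h2] at h1
    have hvt : v ^ t = v * v ^ (t - 1) := by
      calc v ^ t = v ^ (1 + (t-1)) := by congr 1; ring
        _ = v * v ^ (t-1) := Real.rpow_one_add' hv (by intro h; exact ht0.ne' (by linarith))
    have hut : u ^ t ≤ u * v ^ (t - 1) := by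
      rcases eq_or_lt_of_le hu with hu0 | hu0
      · rw [← hu0, Real.zero_rpow ht0.ne', zero_mul]
      · rw [show u ^ t = u * u ^ (t - 1) by
          calc u ^ t = u ^ (1 + (t-1)) := by congr 1; ring
            _ = u * u ^ (t-1) := Real.rpow_one_add' hu (by intro h; exact ht0.ne' (by linarith))]
        exact mul_le_mul_of_nonneg_left (Real.rpow_le_rpow hu huv (by linarith)) hu
    calc (v - u) * ((v ^ t + u ^ t) / 2) ^ (1 - 1/t)
        ≤ (v - u) * v ^ (t - 1) := mul_le_mul_of_nonneg_left h1 (by linarith)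
      _ = v * v ^ (t-1) - u * v ^ (t-1) := by ring
      _ ≤ v ^ t - u ^ t := by rw [hvt]; linarith

lemma key2 {t : ℝ} (ht : 1 ≤ t) {u v : ℝ} (hu : 0 ≤ u) (hv : 0 ≤ v) :
    (v + u) * ((v ^ t + u ^ t) / 2) ^ (1 - 1 / t) ≤ v ^ t + u ^ t := by
  have ht0 : (0:ℝ) < t := lt_of_lt_of_le one_pos ht
  set M := (v ^ t + u ^ t) / 2 with hMdef
  have hM : 0 ≤ M := by positivity
  rcases eq_or_lt_of_le hM with hM0 | hM0
  · have hvt : (0:ℝ) ≤ v ^ t := Real.rpow_nonneg hv t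
    have hut : (0:ℝ) ≤ u ^ t := Real.rpow_nonneg hu t
    have hvv : v ^ t = 0 := by simp only [hMdef] at hM0; linarith
    have huu : u ^ t = 0 := by simp only [hMdef] at hM0; linarith
    have hv0 : v = 0 := by
      by_contra h
      exact absurd hvv (ne_of_gt (Real.rpow_pos_of_pos (lt_of_le_of_ne hv (Ne.symm h)) t))
    have hu0 : u = 0 := by
      by_contra h
      exact absurd huu (ne_of_gt (Real.rpow_pos_of_pos (lt_of_le_of_ne hu (Ne.symm h)) t))
    simp [hv0, hu0, hvv, huu, Real.zero_rpow ht0.ne']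
  · have hpm : ((v + u) / 2) ^ t ≤ M := by
      have := pm2 ht hv hu
      simpa [hMdef] using this
    have hroot : (v + u) / 2 ≤ M ^ (1/t) := by
      have h0 : (0:ℝ) ≤ (v + u) / 2 := by positivity
      have := Real.rpow_le_rpow (Real.rpow_nonneg h0 t) hpm (by positivity : (0:ℝ) ≤ 1/t)
      rwa [← Real.rpow_mul h0, mul_one_div, div_self ht0.ne', Real.rpow_one] at this
    have hsplit : M ^ (1/t) * M ^ (1 - 1/t) = M := by
      rw [← Real.rpow_add hM0, show 1/t + (1 - 1/t) = 1 by ring, Real.rpow_one]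
    have hMe : 0 ≤ M ^ (1 - 1/t) := Real.rpow_nonneg hM _
    calc (v + u) * M ^ (1 - 1/t) = 2 * ((v + u)/2) * M ^ (1 - 1/t) := by ring
      _ ≤ 2 * (M ^ (1/t)) * M ^ (1 - 1/t) := by nlinarith
      _ = 2 * M := by rw [mul_assoc, hsplit]
      _ = v ^ t + u ^ t := by rw [hMdef]; ring

lemma same {t : ℝ} (ht : 1 ≤ t) {u v : ℝ} (hu : 0 ≤ u) (hv : 0 ≤ v) :
    |v - u| * ((v ^ t + u ^ t) / 2) ^ (1 - 1 / t) ≤ |v ^ t - u ^ t| := by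
  have ht0 : (0:ℝ) < t := lt_of_lt_of_le one_pos ht
  rcases le_total u v with h | h
  · have h2 : u ^ t ≤ v ^ t := Real.rpow_le_rpow hu h ht0.le
    rw [abs_of_nonneg (by linarith), abs_of_nonneg (by linarith)]
    exact key1 ht hu h
  · have h2 : v ^ t ≤ u ^ t := Real.rpow_le_rpow hv h ht0.le
    rw [abs_of_nonpos (by linarith), abs_of_nonpos (by linarith)]
    have := key1 ht hv h
    rw [show v ^ t + u ^ t = u ^ t + v ^ t by ring]
    linarith [this]

lemma fz {t x : ℝ} (ht0 : 0 < t) (hx : 0 ≤ x) : |x| ^ t * Real.sign x = x ^ t := by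
  rcases eq_or_lt_of_le hx with h | h
  · simp [← h, Real.sign_zero, Real.zero_rpow ht0.ne']
  · rw [Real.sign_of_pos h, abs_of_pos h, mul_one]

lemma fneg {t x : ℝ} (ht0 : 0 < t) (hx : x ≤ 0) : |x| ^ t * Real.sign x = -((-x) ^ t) := by
  rcases eq_or_lt_of_le hx with h | h
  · simp [h, Real.sign_zero, Real.zero_rpow ht0.ne']
  · rw [Real.sign_of_neg h, abs_of_neg h, mul_neg_one]

lemma main {t : ℝ} (ht : 1 ≤ t) (a b : ℝ) :
    |b - a| * ((|b| ^ t + |a| ^ t) / 2) ^ (1 - 1 / t) ≤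
      |(|b| ^ t * Real.sign b - |a| ^ t * Real.sign a)| := by
  have ht0 : (0:ℝ) < t := lt_of_lt_of_le one_pos ht
  rcases le_total 0 a with ha | ha <;> rcases le_total 0 b with hb | hb
  · -- 0 ≤ a, 0 ≤ b
    rw [fz ht0 ha, fz ht0 hb, abs_of_nonneg hb, abs_of_nonneg ha]
    exact same ht ha hb
  · -- 0 ≤ a, b ≤ 0
    rw [fz ht0 ha, fneg ht0 hb, abs_of_nonneg ha, abs_of_nonpos hb]
    have key := key2 ht (u := a) (v := -b) ha (by linarith)
    have habs : |b - a| = (-b) + a := by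
      rw [abs_of_nonpos (by linarith)]; ring
    have : |(-((-b) ^ t) - a ^ t)| = (-b) ^ t + a ^ t := by
      have h1 : (0:ℝ) ≤ (-b) ^ t := Real.rpow_nonneg (by linarith) t
      have h2 : (0:ℝ) ≤ a ^ t := Real.rpow_nonneg ha t
      rw [abs_of_nonpos (by linarith)]; ring
    rw [habs, this]
    exact key
  · -- a ≤ 0, 0 ≤ b
    rw [fneg ht0 ha, fz ht0 hb, abs_of_nonpos ha, abs_of_nonneg hb]
    have key := key2 ht (u := -a) (v := b) (by linarith) hb
    have habs : |b - a| = b + (-a) := by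
      rw [abs_of_nonneg (by linarith)]; ring
    have : |(b ^ t - -((-a) ^ t))| = b ^ t + (-a) ^ t := by
      have h1 : (0:ℝ) ≤ (-a) ^ t := Real.rpow_nonneg (by linarith) t
      have h2 : (0:ℝ) ≤ b ^ t := Real.rpow_nonneg hb t
      rw [abs_of_nonneg (by linarith)]; ring
    rw [habs, this]
    exact key
  · -- a ≤ 0, b ≤ 0
    rw [fneg ht0 ha, fneg ht0 hb, abs_of_nonpos ha, abs_of_nonpos hb]
    have key := same ht (u := -b) (v := -a) (by linarith) (by linarith)
    have h1 : |b - a| = |(-a) - (-b)| := by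
      rw [show (-a) - (-b) = b - a by ring]
    have h2 : |(-(( -b) ^ t) - -((-a) ^ t))| = |(-a) ^ t - (-b) ^ t| := by
      rw [show (-((-b) ^ t) - -((-a) ^ t)) = ((-a) ^ t - (-b) ^ t) by ring]
    have h3 : (-b) ^ t + (-a) ^ t = (-a) ^ t + (-b) ^ t := by ring
    rw [h1, h2, h3]
    exact key

/-- For every real `t ≥ 1`, all `a b : ℝ` and every `σ ∈ {−1,+1}`,
`| |b|^t sign(b) − σ |a|^t sign(a) | ≥ |b − σ a| ((|b|^t + |a|^t)/2)^{1−1/t}`. -/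
theorem abs_pow_sign_diff_ge (t : ℝ) (ht : 1 ≤ t) (a b s : ℝ) (hs : s = 1 ∨ s = -1) :
    |b - s * a| * ((|b| ^ t + |a| ^ t) / 2) ^ (1 - 1 / t) ≤
      |(|b| ^ t * Real.sign b - s * (|a| ^ t * Real.sign a))| := by
  rcases hs with rfl | rfl
  · simpa using main ht a b
  · have := main ht (-a) b
    simpa [Real.sign_neg, abs_neg, sub_neg_eq_add, neg_mul, mul_neg] using this
end

section
/- For every real t≥1, all a,b∈ℝ, and every σ∈{−1,+1}, one has | |b|^t·sign(b) − σ·|a|^t·sign(a) | ≤ t·|b−σa|·((|b|^t+|a|^t)/2)^{1−1/t}. -/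
private lemma two_rpow_le_self (t : ℝ) (ht : 1 ≤ t) : (2:ℝ) ^ (1 - 1/t) ≤ t := by
  have ht0 : (0:ℝ) < t := lt_of_lt_of_le one_pos ht
  have h1 : (0:ℝ) ≤ 1 - 1/t := by
    rw [sub_nonneg, div_le_one ht0]; exact ht
  have hlog2 : Real.log 2 ≤ 1 := by
    have := Real.log_le_sub_one_of_pos (x := 2) (by norm_num)
    linarith
  have hlogt : 1 - 1/t ≤ Real.log t := by
    have := Real.log_le_sub_one_of_pos (x := t⁻¹) (by positivity)
    rw [Real.log_inv] at this
    rw [one_div]; linarith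
  calc (2:ℝ) ^ (1 - 1/t) = Real.exp (Real.log 2 * (1 - 1/t)) := by
        rw [Real.rpow_def_of_pos (by norm_num)]
    _ ≤ Real.exp (Real.log t) := by
        apply Real.exp_le_exp.2
        calc Real.log 2 * (1 - 1/t) ≤ 1 * (1 - 1/t) :=
              mul_le_mul_of_nonneg_right hlog2 h1
          _ = 1 - 1/t := one_mul _
          _ ≤ Real.log t := hlogt
    _ = t := Real.exp_log ht0

private lemma key_ineq (s : ℝ) (hs0 : 0 < s) (hs1 : s ≤ 1) (u v : ℝ) (hu : 0 ≤ u)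
    (huv : u ≤ v) : s * (v - u) * ((u + v)/2) ^ (s - 1) ≤ v ^ s - u ^ s := by
  rcases eq_or_lt_of_le huv with rfl | hlt
  · simp
  have hv : 0 < v := lt_of_le_of_lt hu hlt
  set m : ℝ := (u + v)/2 with hm
  set d : ℝ := (v - u)/2 with hd
  have hm0 : 0 < m := by rw [hm]; linarith
  have hd0 : 0 < d := by rw [hd]; linarith
  have hmd1 : m + d = v := by rw [hm, hd]; ring
  have hmd2 : m - d = u := by rw [hm, hd]; ring
  -- the function h
  set h : ℝ → ℝ := fun x => (m + x) ^ s - (m - x) ^ s - 2 * s * m ^ (s-1) * x with hh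
  have hmono : MonotoneOn h (Set.Icc 0 d) := by
    apply monotoneOn_of_hasDerivWithinAt_nonneg (f' := fun x =>
        1 * s * (m + x) ^ (s-1) - (-1) * s * (m - x) ^ (s-1) - 2 * s * m ^ (s-1))
        (convex_Icc 0 d)
    · -- continuity
      apply ContinuousOn.sub
      apply ContinuousOn.sub
      · exact (continuous_const.add continuous_id).continuousOn.rpow_const
          (fun x _ => Or.inr hs0.le)
      · exact (continuous_const.sub continuous_id).continuousOn.rpow_const
          (fun x _ => Or.inr hs0.le)
      · exact (continuous_const.mul continuous_id).continuousOn
    · intro x hx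
      rw [interior_Icc] at hx
      have hx1 : 0 < m + x := by have := hx.1; linarith
      have hx2 : 0 < m - x := by have := hx.2; nlinarith [hmd2, hu]
      have d1 : HasDerivAt (fun x : ℝ => (m + x) ^ s) (1 * s * (m + x) ^ (s-1)) x :=
        ((hasDerivAt_id x).const_add m).rpow_const (Or.inl (ne_of_gt hx1))
      have d2 : HasDerivAt (fun x : ℝ => (m - x) ^ s) ((-1) * s * (m - x) ^ (s-1)) x :=
        ((hasDerivAt_id x).const_sub m).rpow_const (Or.inl (ne_of_gt hx2))
      have d3 : HasDerivAt (fun x : ℝ => 2 * s * m ^ (s-1) * x) (2 * s * m ^ (s-1)) x := by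
        simpa using (hasDerivAt_id x).const_mul (2 * s * m ^ (s-1))
      exact (((d1.sub d2).sub d3).hasDerivWithinAt)
    · intro x hx
      rw [interior_Icc] at hx
      have hx1 : 0 < m + x := by have := hx.1; linarith
      have hx2 : 0 < m - x := by have := hx.2; nlinarith [hmd2, hu]
      have core : 2 * m ^ (s-1) ≤ (m + x) ^ (s-1) + (m - x) ^ (s-1) := by
        set A : ℝ := (m + x) ^ ((s-1)/2) with hA
        set B : ℝ := (m - x) ^ ((s-1)/2) with hB
        have hA2 : A ^ 2 = (m + x) ^ (s-1) := by
          rw [hA, ← Real.rpow_natCast ((m+x) ^ ((s-1)/2)) 2, ← Real.rpow_mul hx1.le]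
          norm_num
        have hB2 : B ^ 2 = (m - x) ^ (s-1) := by
          rw [hB, ← Real.rpow_natCast ((m-x) ^ ((s-1)/2)) 2, ← Real.rpow_mul hx2.le]
          norm_num
        have hAB : A * B = ((m + x) * (m - x)) ^ ((s-1)/2) :=
          (Real.mul_rpow hx1.le hx2.le).symm
        have hmm : (m * m) ^ ((s-1)/2) = m ^ (s-1) := by
          rw [Real.mul_rpow hm0.le hm0.le, ← Real.rpow_add hm0]
          norm_num
        have hprod : 0 < (m + x) * (m - x) := mul_pos hx1 hx2
        have hle : (m + x) * (m - x) ≤ m * m := by nlinarith [hx.1]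
        have h1 : m ^ (s-1) ≤ A * B := by
          rw [hAB, ← hmm]
          exact Real.rpow_le_rpow_of_nonpos hprod hle (by linarith)
        have h2' : 2 * A * B ≤ (m + x) ^ (s-1) + (m - x) ^ (s-1) := by
          rw [← hA2, ← hB2]; exact two_mul_le_add_sq A B
        nlinarith [h1, h2']
      nlinarith [core, hs0.le]
  have h0 : h 0 = 0 := by simp [hh]
  have hdv : h d = v ^ s - u ^ s - 2 * s * m ^ (s-1) * d := by
    rw [hh]; simp only []; rw [hmd1, hmd2]
  have hle := hmono (Set.left_mem_Icc.2 hd0.le) (Set.right_mem_Icc.2 hd0.le) hd0.le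
  rw [h0, hdv] at hle
  have h2d : s * (v - u) * m ^ (s-1) = 2 * s * m ^ (s-1) * d := by rw [hd]; ring
  linarith [hle]

private lemma case_same (t : ℝ) (ht : 1 ≤ t) (a b : ℝ) (ha : 0 ≤ a) (hab : a ≤ b) :
    b ^ t - a ^ t ≤ t * (b - a) * ((a ^ t + b ^ t)/2) ^ (1 - 1/t) := by
  have ht0 : (0:ℝ) < t := lt_of_lt_of_le one_pos ht
  rcases eq_or_lt_of_le (ha.trans hab) with hb0 | hb
  · have ha0 : a = 0 := le_antisymm (hab.trans hb0.symm.le) ha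
    rw [ha0, ← hb0, Real.zero_rpow (ne_of_gt ht0)]
    simp
  have hu : 0 ≤ a ^ t := Real.rpow_nonneg ha t
  have huv : a ^ t ≤ b ^ t := Real.rpow_le_rpow ha hab ht0.le
  have hk := key_ineq (1/t) (by positivity) (by rw [div_le_one ht0]; exact ht)
      (a ^ t) (b ^ t) hu huv
  have hbb : (b ^ t) ^ (1/t : ℝ) = b := by
    rw [← Real.rpow_mul hb.le, mul_one_div, div_self (ne_of_gt ht0), Real.rpow_one]
  have haa : (a ^ t) ^ (1/t : ℝ) = a := by
    rw [← Real.rpow_mul ha, mul_one_div, div_self (ne_of_gt ht0), Real.rpow_one]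
  rw [hbb, haa] at hk
  set m : ℝ := (a ^ t + b ^ t)/2 with hm
  have hm0 : 0 < m := by
    have : 0 < b ^ t := Real.rpow_pos_of_pos hb t
    rw [hm]; linarith
  have hmm : m ^ (1 - 1/t) * m ^ (1/t - 1) = 1 := by
    rw [← Real.rpow_add hm0]
    norm_num
  have h2 : t * m ^ (1 - 1/t) * (1/t * (b ^ t - a ^ t) * m ^ (1/t - 1)) ≤
      t * m ^ (1 - 1/t) * (b - a) :=
    mul_le_mul_of_nonneg_left hk (by positivity)
  have expand : t * m ^ (1 - 1/t) * (1/t * (b ^ t - a ^ t) * m ^ (1/t - 1)) =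
      b ^ t - a ^ t := by
    have h1 : t * (1/t) = 1 := by field_simp
    calc t * m ^ (1 - 1/t) * (1/t * (b ^ t - a ^ t) * m ^ (1/t - 1))
        = t * (1/t) * (m ^ (1 - 1/t) * m ^ (1/t - 1)) * (b ^ t - a ^ t) := by ring
      _ = b ^ t - a ^ t := by rw [h1, hmm]; ring
  calc b ^ t - a ^ t = _ := expand.symm
    _ ≤ t * m ^ (1 - 1/t) * (b - a) := h2
    _ = t * (b - a) * m ^ (1 - 1/t) := by ring

private lemma case_opp (t : ℝ) (ht : 1 ≤ t) (b c : ℝ) (hb : 0 ≤ b) (hc : 0 ≤ c) :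
    b ^ t + c ^ t ≤ t * (b + c) * ((b ^ t + c ^ t)/2) ^ (1 - 1/t) := by
  have ht0 : (0:ℝ) < t := lt_of_lt_of_le one_pos ht
  rcases eq_or_lt_of_le (add_nonneg hb hc) with hbc0 | hbc
  · have hb0 : b = 0 := by linarith
    have hc0 : c = 0 := by linarith
    rw [hb0, hc0, Real.zero_rpow (ne_of_gt ht0)]
    simp
  have hsup : b ^ t + c ^ t ≤ (b + c) ^ t := by
    have h := NNReal.add_rpow_le_rpow_add b.toNNReal c.toNNReal ht
    have h' := NNReal.coe_le_coe.2 h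
    rwa [NNReal.coe_add, NNReal.coe_rpow, NNReal.coe_rpow, NNReal.coe_rpow, NNReal.coe_add,
      Real.coe_toNNReal b hb, Real.coe_toNNReal c hc] at h'
  set S : ℝ := b ^ t + c ^ t with hS
  have hS0 : 0 ≤ S := add_nonneg (Real.rpow_nonneg hb t) (Real.rpow_nonneg hc t)
  rcases eq_or_lt_of_le hS0 with hSz | hSpos
  · rw [← hSz]
    positivity
  have hS2 : 0 < S / 2 := by linarith
  have hsplit : (S/2) ^ (1/t : ℝ) * (S/2) ^ (1 - 1/t : ℝ) = S / 2 := by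
    rw [← Real.rpow_add hS2]
    norm_num
  have h1 : (S/2) ^ (1/t : ℝ) = S ^ (1/t : ℝ) / 2 ^ (1/t : ℝ) :=
    Real.div_rpow hS0 (by norm_num) _
  have hSle : S ^ (1/t : ℝ) ≤ b + c := by
    calc S ^ (1/t : ℝ) ≤ ((b + c) ^ t) ^ (1/t : ℝ) :=
          Real.rpow_le_rpow hS0 hsup (by positivity)
      _ = b + c := by
          rw [← Real.rpow_mul (by linarith), mul_one_div, div_self (ne_of_gt ht0),
            Real.rpow_one]
  have h2le : (2:ℝ) / 2 ^ (1/t : ℝ) = 2 ^ (1 - 1/t : ℝ) := by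
    rw [Real.rpow_sub (by norm_num), Real.rpow_one]
  have hkey : 2 * (S/2) ^ (1/t : ℝ) ≤ t * (b + c) := by
    rw [h1]
    calc 2 * (S ^ (1/t : ℝ) / 2 ^ (1/t : ℝ)) = (2 / 2 ^ (1/t : ℝ)) * S ^ (1/t : ℝ) := by
          ring
      _ = 2 ^ (1 - 1/t : ℝ) * S ^ (1/t : ℝ) := by rw [h2le]
      _ ≤ t * (b + c) := by
          apply mul_le_mul (two_rpow_le_self t ht) hSle (Real.rpow_nonneg hS0 _) ht0.le
  calc S = 2 * ((S/2) ^ (1/t : ℝ) * (S/2) ^ (1 - 1/t : ℝ)) := by rw [hsplit]; ring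
    _ = (2 * (S/2) ^ (1/t : ℝ)) * (S/2) ^ (1 - 1/t : ℝ) := by ring
    _ ≤ (t * (b + c)) * (S/2) ^ (1 - 1/t : ℝ) :=
        mul_le_mul_of_nonneg_right hkey (Real.rpow_nonneg hS2.le _)

private lemma sign_mul_nonneg (t : ℝ) (ht : 0 < t) {x : ℝ} (hx : 0 ≤ x) :
    |x| ^ t * Real.sign x = x ^ t := by
  rcases eq_or_lt_of_le hx with rfl | h
  · simp [Real.sign_zero, Real.zero_rpow (ne_of_gt ht)]
  · rw [abs_of_pos h, Real.sign_of_pos h, mul_one]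

private lemma sign_mul_nonpos (t : ℝ) (ht : 0 < t) {x : ℝ} (hx : x ≤ 0) :
    |x| ^ t * Real.sign x = -((-x) ^ t) := by
  rcases eq_or_lt_of_le hx with rfl | h
  · simp [Real.sign_zero, Real.zero_rpow (ne_of_gt ht)]
  · rw [abs_of_neg h, Real.sign_of_neg h]
    ring

private lemma both_nonneg (t : ℝ) (ht : 1 ≤ t) (a b : ℝ) (ha : 0 ≤ a) (hb : 0 ≤ b) :
    |b ^ t - a ^ t| ≤ t * |b - a| * ((b ^ t + a ^ t)/2) ^ (1 - 1/t) := by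
  have ht0 : (0:ℝ) < t := lt_of_lt_of_le one_pos ht
  rcases le_total a b with hab | hba
  · have h1 : a ^ t ≤ b ^ t := Real.rpow_le_rpow ha hab ht0.le
    rw [abs_of_nonneg (sub_nonneg.2 h1), abs_of_nonneg (sub_nonneg.2 hab), add_comm (b ^ t)]
    exact case_same t ht a b ha hab
  · have h1 : b ^ t ≤ a ^ t := Real.rpow_le_rpow hb hba ht0.le
    rw [abs_sub_comm, abs_of_nonneg (sub_nonneg.2 h1), abs_sub_comm b a,
      abs_of_nonneg (sub_nonneg.2 hba)]
    exact case_same t ht b a hb hba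

private lemma main2 (t : ℝ) (ht : 1 ≤ t) (a b : ℝ) :
    |(|b| ^ t * Real.sign b - |a| ^ t * Real.sign a)| ≤
      t * |b - a| * ((|b| ^ t + |a| ^ t) / 2) ^ (1 - 1 / t) := by
  have ht0 : (0:ℝ) < t := lt_of_lt_of_le one_pos ht
  rcases le_total 0 a with ha | ha <;> rcases le_total 0 b with hb | hb
  · -- 0 ≤ a, 0 ≤ b
    rw [sign_mul_nonneg t ht0 ha, sign_mul_nonneg t ht0 hb,
      abs_of_nonneg ha, abs_of_nonneg hb]
    exact both_nonneg t ht a b ha hb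
  · -- 0 ≤ a, b ≤ 0
    rw [sign_mul_nonneg t ht0 ha, sign_mul_nonpos t ht0 hb,
      abs_of_nonneg ha, abs_of_nonpos hb]
    have key := case_opp t ht (-b) a (by linarith) ha
    have hn1 : (0:ℝ) ≤ (-b) ^ t := Real.rpow_nonneg (by linarith) t
    have hn2 : (0:ℝ) ≤ a ^ t := Real.rpow_nonneg ha t
    have e1 : |(-((-b) ^ t) - a ^ t)| = (-b) ^ t + a ^ t := by
      rw [abs_of_nonpos (by linarith)]
      ring
    have e2 : |b - a| = -b + a := by
      rw [abs_of_nonpos (by linarith)]; ring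
    rw [e1, e2]
    exact key
  · -- a ≤ 0, 0 ≤ b
    rw [sign_mul_nonpos t ht0 ha, sign_mul_nonneg t ht0 hb,
      abs_of_nonpos ha, abs_of_nonneg hb]
    have key := case_opp t ht b (-a) hb (by linarith)
    have hn1 : (0:ℝ) ≤ b ^ t := Real.rpow_nonneg hb t
    have hn2 : (0:ℝ) ≤ (-a) ^ t := Real.rpow_nonneg (by linarith) t
    have e1 : |(b ^ t - -((-a) ^ t))| = b ^ t + (-a) ^ t := by
      rw [sub_neg_eq_add, abs_of_nonneg (by linarith)]
    have e2 : |b - a| = b + -a := by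
      rw [abs_of_nonneg (by linarith)]; ring
    rw [e1, e2]
    exact key
  · -- a ≤ 0, b ≤ 0
    rw [sign_mul_nonpos t ht0 ha, sign_mul_nonpos t ht0 hb,
      abs_of_nonpos ha, abs_of_nonpos hb]
    have key := both_nonneg t ht (-b) (-a) (by linarith) (by linarith)
    have e1 : |(-((-b) ^ t) - -((-a) ^ t))| = |(-a) ^ t - (-b) ^ t| := by
      rw [show -((-b) ^ t) - -((-a) ^ t) = (-a) ^ t - (-b) ^ t from by ring]
    have e2 : |(-a : ℝ) - -b| = |b - a| := by
      rw [show (-a : ℝ) - -b = b - a from by ring]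
    rw [e1, ← e2, add_comm ((-b) ^ t)]
    exact key

/-- For every real `t ≥ 1`, all `a b : ℝ` and every `σ ∈ {−1,+1}`,
`| |b|^t sign(b) − σ |a|^t sign(a) | ≤ t |b − σ a| ((|b|^t + |a|^t)/2)^{1−1/t}`. -/
theorem abs_pow_sign_diff_le (t : ℝ) (ht : 1 ≤ t) (a b s : ℝ) (hs : s = 1 ∨ s = -1) :
    |(|b| ^ t * Real.sign b - s * (|a| ^ t * Real.sign a))| ≤
      t * |b - s * a| * ((|b| ^ t + |a| ^ t) / 2) ^ (1 - 1 / t) := by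
  rcases hs with rfl | rfl
  · simpa using main2 t ht a b
  · have h := main2 t ht (-a) b
    rw [abs_neg, Real.sign_neg] at h
    have e1 : |b| ^ t * Real.sign b - |a| ^ t * -Real.sign a =
        |b| ^ t * Real.sign b - (-1) * (|a| ^ t * Real.sign a) := by ring
    have e2 : b - -a = b - (-1) * a := by ring
    rw [e1, e2] at h
    exact h
end
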